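/- arXiv:2211.15297 — 3 statements merged into one kernel-verified Lean document; each statement's English description precedes it below -/
import Mathlib

section
/- Let r > 0 and let u, v : ℝ → ℝ be twice differentiable with (u̇(t), v̇(t)) ≠ (0,0) for all t. Then the geodesic curvature of the curve γ(t) = ψ(u(t), v(t)) in H²(r) is given by κ = −[cosh(u/r)(u̇v̈ − üv̇) + (v̇/r)·sinh(u/r)·(2u̇² + cosh²(u/r)v̇²)] / (u̇² + cosh²(u/r)v̇²)^{3/2}. -/
/-!
The coordinates are differentiated twice by the chain rule. In each of `γ`, `γ̇`, `γ̈` the first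
two coordinates are the hyperbolic rotation by `v/r` of a vector that does not involve `v` (with
derivatives of `u`, `v` as coefficients), so both `‖γ̇‖²` and the triple product in `κ` pick up
the factor `cosh²(v/r) - sinh²(v/r) = 1`; at `v = 0` the identity `cosh² - sinh² = 1` in `u/r`
turns them into `u̇² + cosh²(u/r) v̇²` and `r` times the claimed numerator.
-/

noncomputable section
open Real

/-- Minkowski inner product of `E₁³`. -/
def mink3 (X Y : ℝ × ℝ × ℝ) : ℝ := -(X.1 * Y.1) + X.2.1 * Y.2.1 + X.2.2 * Y.2.2

/-- Speed `‖γ̇‖ = √(−ẋ² + ẏ² + ż²)` of a curve `(x,y,z)` in `E₁³`. -/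
def speed3 (x y z : ℝ → ℝ) (t : ℝ) : ℝ :=
  Real.sqrt (-(deriv x t) ^ 2 + (deriv y t) ^ 2 + (deriv z t) ^ 2)

/-- Geodesic curvature of the curve `(x,y,z)` in `H²(r)`. -/
def kappaH2 (r : ℝ) (x y z : ℝ → ℝ) (t : ℝ) : ℝ :=
  -(x t * (deriv (deriv y) t * deriv z t - deriv y t * deriv (deriv z) t)
      - y t * (deriv (deriv x) t * deriv z t - deriv x t * deriv (deriv z) t)
      + z t * (deriv (deriv x) t * deriv y t - deriv x t * deriv (deriv y) t))
    / (r * (speed3 x y z t) ^ 3)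

/-- First component of `γ(t) = ψ(u(t), v(t))` (semi-geodesic parametrization). -/
def gX (r : ℝ) (u v : ℝ → ℝ) (t : ℝ) : ℝ :=
  r * Real.cosh (u t / r) * Real.cosh (v t / r)

/-- Second component of `γ(t) = ψ(u(t), v(t))`. -/
def gY (r : ℝ) (u v : ℝ → ℝ) (t : ℝ) : ℝ :=
  r * Real.cosh (u t / r) * Real.sinh (v t / r)

/-- Third component of `γ(t) = ψ(u(t), v(t))`. -/
def gZ (r : ℝ) (u v : ℝ → ℝ) (t : ℝ) : ℝ :=
  r * Real.sinh (u t / r)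

/-- `‖γ̇‖` in semi-geodesic coordinates: `√(u̇² + cosh²(u/r) v̇²)`. -/
def speedSG (r : ℝ) (u v : ℝ → ℝ) (t : ℝ) : ℝ :=
  Real.sqrt ((deriv u t) ^ 2 + (Real.cosh (u t / r)) ^ 2 * (deriv v t) ^ 2)

/-- Geodesic curvature of `γ(t) = ψ(u(t), v(t))` in `H²(r)`. -/
def kappaSG (r : ℝ) (u v : ℝ → ℝ) (t : ℝ) : ℝ :=
  kappaH2 r (gX r u v) (gY r u v) (gZ r u v) t

/-- The Euler–Lagrange equations of the functional `∫ f(u,v) ‖γ̇‖ dt` in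
semi-geodesic coordinates. -/
def EulerLagrange (r : ℝ) (f : ℝ → ℝ → ℝ) (u v : ℝ → ℝ) : Prop :=
  ∀ t : ℝ,
    deriv (fun a => f a (v t)) (u t) * speedSG r u v t
        + f (u t) (v t) * Real.sinh (u t / r) * Real.cosh (u t / r) * (deriv v t) ^ 2
          / (r * speedSG r u v t)
      = deriv (fun s => f (u s) (v s) * deriv u s / speedSG r u v s) t
    ∧ deriv (fun b => f (u t) b) (v t) * speedSG r u v t
      = deriv (fun s =>
          f (u s) (v s) * deriv v s * (Real.cosh (u s / r)) ^ 2 / speedSG r u v s) t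


section SemiGeodesic

variable {r : ℝ} {u v : ℝ → ℝ}

theorem hasDerivAt_const_mul_cosh_mul_comp {F G : ℝ → ℝ} (hF : ∀ y, HasDerivAt F (G y) y)
    (hr : r ≠ 0) {x : ℝ} (hu : DifferentiableAt ℝ u x) (hv : DifferentiableAt ℝ v x) :
    HasDerivAt (fun t => r * cosh (u t / r) * F (v t / r))
      (deriv u x * sinh (u x / r) * F (v x / r) + deriv v x * cosh (u x / r) * G (v x / r)) x := by
  refine (((hu.hasDerivAt.div_const r).cosh.const_mul r).fun_mul
    ((hF _).comp x (hv.hasDerivAt.div_const r))).congr_deriv ?_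
  simp only [Function.comp_apply]
  field_simp

theorem deriv_deriv_const_mul_cosh_mul_comp {F G : ℝ → ℝ} (hF : ∀ y, HasDerivAt F (G y) y)
    (hG : ∀ y, HasDerivAt G (F y) y) (hr : r ≠ 0) (hu : Differentiable ℝ u)
    (hv : Differentiable ℝ v) {t : ℝ} (hu2 : DifferentiableAt ℝ (deriv u) t)
    (hv2 : DifferentiableAt ℝ (deriv v) t) :
    deriv (deriv fun t => r * cosh (u t / r) * F (v t / r)) t
      = deriv (deriv u) t * sinh (u t / r) * F (v t / r)
        + deriv (deriv v) t * cosh (u t / r) * G (v t / r)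
        + ((deriv u t ^ 2 + deriv v t ^ 2) * cosh (u t / r) * F (v t / r)
          + 2 * deriv u t * deriv v t * sinh (u t / r) * G (v t / r)) / r := by
  have hu' := (hu t).hasDerivAt.div_const r
  have hv' := (hv t).hasDerivAt.div_const r
  rw [funext fun x => (hasDerivAt_const_mul_cosh_mul_comp hF hr (hu x) (hv x)).deriv]
  refine (((hu2.hasDerivAt.fun_mul hu'.sinh).fun_mul ((hF _).comp t hv')).fun_add
    ((hv2.hasDerivAt.fun_mul hu'.cosh).fun_mul ((hG _).comp t hv'))).deriv.trans ?_
  simp only [Function.comp_apply]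
  field_simp
  ring

theorem hasDerivAt_gZ (hr : r ≠ 0) {x : ℝ} (hu : DifferentiableAt ℝ u x) :
    HasDerivAt (gZ r u v) (deriv u x * cosh (u x / r)) x := by
  refine ((hu.hasDerivAt.div_const r).sinh.const_mul r).congr_deriv ?_
  field_simp

theorem deriv_deriv_gZ (hr : r ≠ 0) (hu : Differentiable ℝ u) {t : ℝ}
    (hu2 : DifferentiableAt ℝ (deriv u) t) :
    deriv (deriv (gZ r u v)) t
      = deriv (deriv u) t * cosh (u t / r) + deriv u t ^ 2 * sinh (u t / r) / r := by
  rw [funext fun x => (hasDerivAt_gZ (v := v) hr (hu x)).deriv]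
  refine (hu2.hasDerivAt.fun_mul ((hu t).hasDerivAt.div_const r).cosh).deriv.trans ?_
  field_simp

theorem speed3_gX_gY_gZ (hr : r ≠ 0) {t : ℝ} (hu : DifferentiableAt ℝ u t)
    (hv : DifferentiableAt ℝ v t) :
    speed3 (gX r u v) (gY r u v) (gZ r u v) t = speedSG r u v t := by
  have hX : HasDerivAt (gX r u v) _ t := hasDerivAt_const_mul_cosh_mul_comp hasDerivAt_cosh hr hu hv
  have hY : HasDerivAt (gY r u v) _ t := hasDerivAt_const_mul_cosh_mul_comp hasDerivAt_sinh hr hu hv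
  rw [speed3, speedSG, hX.deriv, hY.deriv, (hasDerivAt_gZ hr hu).deriv]
  congr 1
  linear_combination (deriv v t ^ 2 * cosh (u t / r) ^ 2 - deriv u t ^ 2 * sinh (u t / r) ^ 2)
    * cosh_sq_sub_sinh_sq (v t / r) + deriv u t ^ 2 * cosh_sq_sub_sinh_sq (u t / r)

theorem speedSG_pow_three (t : ℝ) :
    speedSG r u v t ^ 3
      = (deriv u t ^ 2 + cosh (u t / r) ^ 2 * deriv v t ^ 2) ^ ((3 : ℝ) / 2) := by
  rw [rpow_div_two_eq_sqrt _ (by positivity), speedSG]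
  norm_cast

end SemiGeodesic

theorem curvature_in_semi_geodesic_coordinates_general (r : ℝ) (hr : 0 < r) (u v : ℝ → ℝ)
    (hu : Differentiable ℝ u) (hu2 : Differentiable ℝ (deriv u))
    (hv : Differentiable ℝ v) (hv2 : Differentiable ℝ (deriv v)) :
    ∀ t : ℝ,
      kappaSG r u v t
        = -(Real.cosh (u t / r)
              * (deriv u t * deriv (deriv v) t - deriv (deriv u) t * deriv v t)
            + deriv v t / r * Real.sinh (u t / r)
              * (2 * (deriv u t) ^ 2 + (Real.cosh (u t / r)) ^ 2 * (deriv v t) ^ 2))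
          / ((deriv u t) ^ 2 + (Real.cosh (u t / r)) ^ 2 * (deriv v t) ^ 2)
            ^ ((3 : ℝ) / 2) := by
  intro t
  have hr0 : r ≠ 0 := hr.ne'
  rw [kappaSG, kappaH2, speed3_gX_gY_gZ hr0 (hu t) (hv t), speedSG_pow_three,
    deriv_deriv_gZ hr0 hu (hu2 t), (hasDerivAt_gZ hr0 (hu t)).deriv]
  unfold gX gY gZ
  rw [deriv_deriv_const_mul_cosh_mul_comp hasDerivAt_cosh hasDerivAt_sinh hr0 hu hv (hu2 t) (hv2 t),
    deriv_deriv_const_mul_cosh_mul_comp hasDerivAt_sinh hasDerivAt_cosh hr0 hu hv (hu2 t) (hv2 t),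
    (hasDerivAt_const_mul_cosh_mul_comp hasDerivAt_cosh hr0 (hu t) (hv t)).deriv,
    (hasDerivAt_const_mul_cosh_mul_comp hasDerivAt_sinh hr0 (hu t) (hv t)).deriv]
  conv_rhs => rw [← mul_div_mul_left _ _ hr0]
  congr 1
  field_simp
  set A := cosh (u t / r)
  set B := sinh (u t / r)
  set p := deriv u t
  set q := deriv v t
  set p' := deriv (deriv u) t
  set q' := deriv (deriv v) t
  set c := r * A * (p * q' - p' * q) + 2 * p ^ 2 * q * B
  -- The triple product on the left is `(cosh² - sinh²)(v/r) * (c * (A² - B²) + q³ * A² * B)`.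
  linear_combination -(c * (A ^ 2 - B ^ 2) + q ^ 3 * A ^ 2 * B) * cosh_sq_sub_sinh_sq (v t / r)
    - c * cosh_sq_sub_sinh_sq (u t / r)

/-- curvature of `γ(t) = ψ(u(t), v(t))` in semi-geodesic coordinates. -/
theorem curvature_in_semi_geodesic_coordinates (r : ℝ) (hr : 0 < r) (u v : ℝ → ℝ)
    (hu : Differentiable ℝ u) (hu2 : Differentiable ℝ (deriv u))
    (hv : Differentiable ℝ v) (hv2 : Differentiable ℝ (deriv v))
    (hreg : ∀ t : ℝ, (deriv u t, deriv v t) ≠ (0, 0)) :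
    ∀ t : ℝ,
      kappaSG r u v t
        = -(Real.cosh (u t / r)
              * (deriv u t * deriv (deriv v) t - deriv (deriv u) t * deriv v t)
            + deriv v t / r * Real.sinh (u t / r)
              * (2 * (deriv u t) ^ 2 + (Real.cosh (u t / r)) ^ 2 * (deriv v t) ^ 2))
          / ((deriv u t) ^ 2 + (Real.cosh (u t / r)) ^ 2 * (deriv v t) ^ 2)
            ^ ((3 : ℝ) / 2) :=
  curvature_in_semi_geodesic_coordinates_general r hr u v hu hu2 hv hv2
end
end

section
/- Let r > 0, let f : ℝ² → ℝ be a positive twice continuously differentiable function, and let u, v : ℝ → ℝ be twice differentiable with (u̇(t), v̇(t)) ≠ (0,0) for all t. Then the curve γ(t) = ψ(u(t), v(t)) satisfies the Euler–Lagrange equations of the functional ∫ f(u,v)‖γ̇‖ dt if and only if its geodesic curvature κ in H²(r) satisfies κ = (1/(f‖γ̇‖))·(v̇ f_u(u,v) cosh(u/r) − u̇ f_v(u,v)/cosh(u/r)) for all t. -/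
noncomputable section
open Real

/-!
In the frame obtained by the Lorentz boost of rapidity `v/r` in the `(x, y)`-plane, the point
`ψ(u, v)` of the curve, its velocity and its acceleration have coordinates not involving `v`.
Boosts preserve both the Minkowski form and the determinant, so the geodesic curvature becomes
an explicit expression in `u, u̇, ü, v̇, v̈`.

Let `E₁, E₂` be the residuals of the two Euler–Lagrange equations. Invariance of the functional
under reparametrisation gives the Noether identity `u̇ E₁ + v̇ E₂ = 0`, and a direct computation
gives `cosh²(u/r) v̇ E₁ - u̇ E₂ = -f cosh(u/r) ‖γ̇‖² (κ - κ_f)`, where `κ_f` is the prescribed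
curvature. The matrix of these two relations has determinant `-‖γ̇‖² ≠ 0`, so `E₁ = E₂ = 0` iff
`κ = κ_f`.
-/

def det3 (X Y Z : ℝ × ℝ × ℝ) : ℝ :=
  X.1 * (Y.2.1 * Z.2.2 - Z.2.1 * Y.2.2) - X.2.1 * (Y.1 * Z.2.2 - Z.1 * Y.2.2)
    + X.2.2 * (Y.1 * Z.2.1 - Z.1 * Y.2.1)

def boost (θ : ℝ) (X : ℝ × ℝ × ℝ) : ℝ × ℝ × ℝ :=
  (X.1 * cosh θ + X.2.1 * sinh θ, X.1 * sinh θ + X.2.1 * cosh θ, X.2.2)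

theorem det3_boost (θ : ℝ) (X Y Z : ℝ × ℝ × ℝ) :
    det3 (boost θ X) (boost θ Y) (boost θ Z) = det3 X Y Z := by
  rw [← mul_one (det3 X Y Z), ← cosh_sq_sub_sinh_sq θ]
  simp only [det3, boost]
  ring

theorem mink3_boost (θ : ℝ) (X Y : ℝ × ℝ × ℝ) :
    mink3 (boost θ X) (boost θ Y) = mink3 X Y := by
  simp only [mink3, boost]
  linear_combination (X.2.1 * Y.2.1 - X.1 * Y.1) * cosh_sq_sub_sinh_sq θ

theorem speed3_eq_sqrt_mink3 (x y z : ℝ → ℝ) (t : ℝ) :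
    speed3 x y z t
      = √(mink3 (deriv x t, deriv y t, deriv z t) (deriv x t, deriv y t, deriv z t)) := by
  simp only [speed3, mink3]
  congr 1
  ring

theorem kappaH2_eq_det3 (r : ℝ) (x y z : ℝ → ℝ) (t : ℝ) :
    kappaH2 r x y z t =
      -det3 (x t, y t, z t) (deriv (deriv x) t, deriv (deriv y) t, deriv (deriv z) t)
          (deriv x t, deriv y t, deriv z t) / (r * speed3 x y z t ^ 3) := by
  rfl

theorem hasDerivAt_mul_cosh_add_mul_sinh {a b θ : ℝ → ℝ} {a' b' θ' t : ℝ}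
    (ha : HasDerivAt a a' t) (hb : HasDerivAt b b' t) (hθ : HasDerivAt θ θ' t) :
    HasDerivAt (fun s => a s * cosh (θ s) + b s * sinh (θ s))
      ((a' + b t * θ') * cosh (θ t) + (b' + a t * θ') * sinh (θ t)) t :=
  ((ha.fun_mul hθ.cosh).fun_add (hb.fun_mul hθ.sinh)).congr_deriv (by ring)

theorem hasDerivAt_mul_sinh_add_mul_cosh {a b θ : ℝ → ℝ} {a' b' θ' t : ℝ}
    (ha : HasDerivAt a a' t) (hb : HasDerivAt b b' t) (hθ : HasDerivAt θ θ' t) :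
    HasDerivAt (fun s => a s * sinh (θ s) + b s * cosh (θ s))
      ((a' + b t * θ') * sinh (θ t) + (b' + a t * θ') * cosh (θ t)) t :=
  ((ha.fun_mul hθ.sinh).fun_add (hb.fun_mul hθ.cosh)).congr_deriv (by ring)

theorem and_eq_zero_iff_of_det_ne_zero {K : Type*} [Field K] {a b c d l x y z : K}
    (hdet : a * d - b * c ≠ 0) (hl : l ≠ 0) (h₁ : a * x + b * y = 0)
    (h₂ : c * x + d * y = l * z) : x = 0 ∧ y = 0 ↔ z = 0 := by
  constructor
  · rintro ⟨rfl, rfl⟩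
    simpa [hl] using h₂.symm
  · rintro rfl
    have hx : (a * d - b * c) * x = 0 := by linear_combination d * h₁ - b * h₂
    have hy : (a * d - b * c) * y = 0 := by linear_combination a * h₂ - c * h₁
    exact ⟨(mul_eq_zero.mp hx).resolve_left hdet, (mul_eq_zero.mp hy).resolve_left hdet⟩

theorem hasDerivAt_comp_of_differentiableAt_uncurry {f : ℝ → ℝ → ℝ} {u v : ℝ → ℝ}
    {u' v' t : ℝ}
    (hf : DifferentiableAt ℝ (Function.uncurry f) (u t, v t)) (hu : HasDerivAt u u' t)
    (hv : HasDerivAt v v' t) :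
    HasDerivAt (fun s => f (u s) (v s))
      (deriv (fun a => f a (v t)) (u t) * u' + deriv (fun b => f (u t) b) (v t) * v') t := by
  set L := fderiv ℝ (Function.uncurry f) (u t, v t)
  have hL : HasFDerivAt (Function.uncurry f) L (u t, v t) := hf.hasFDerivAt
  have h₁ : HasDerivAt (fun a => f a (v t)) (L (1, 0)) (u t) := by
    have := hL.comp_hasDerivAt (u t) ((hasDerivAt_id (u t)).prodMk (hasDerivAt_const (u t) (v t)))
    exact this
  have h₂ : HasDerivAt (fun b => f (u t) b) (L (0, 1)) (v t) := by
    have := hL.comp_hasDerivAt (v t) ((hasDerivAt_const (v t) (u t)).prodMk (hasDerivAt_id (v t)))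
    exact this
  have hL_apply : L (u', v') = L (1, 0) * u' + L (0, 1) * v' := by
    rw [show ((u', v') : ℝ × ℝ) = u' • (1, 0) + v' • (0, 1) by simp, map_add, map_smul,
      map_smul, smul_eq_mul, smul_eq_mul, mul_comm u', mul_comm v']
  rw [h₁.deriv, h₂.deriv, ← hL_apply]
  exact hL.comp_hasDerivAt t (hu.prodMk hv)

theorem speedSG_sq (r : ℝ) (u v : ℝ → ℝ) (t : ℝ) :
    speedSG r u v t ^ 2 = deriv u t ^ 2 + cosh (u t / r) ^ 2 * deriv v t ^ 2 :=
  sq_sqrt (by positivity)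

def elResidualU (r : ℝ) (f : ℝ → ℝ → ℝ) (u v : ℝ → ℝ) (t : ℝ) : ℝ :=
  deriv (fun a => f a (v t)) (u t) * speedSG r u v t
      + f (u t) (v t) * sinh (u t / r) * cosh (u t / r) * deriv v t ^ 2 / (r * speedSG r u v t)
    - deriv (fun s => f (u s) (v s) * deriv u s / speedSG r u v s) t

def elResidualV (r : ℝ) (f : ℝ → ℝ → ℝ) (u v : ℝ → ℝ) (t : ℝ) : ℝ :=
  deriv (fun b => f (u t) b) (v t) * speedSG r u v t
    - deriv (fun s => f (u s) (v s) * deriv v s * cosh (u s / r) ^ 2 / speedSG r u v s) t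

section SemiGeodesic

variable {r : ℝ} {f : ℝ → ℝ → ℝ} {u v : ℝ → ℝ} {t : ℝ}

theorem position_eq_boost :
    (gX r u v t, gY r u v t, gZ r u v t)
      = boost (v t / r) (r * cosh (u t / r), 0, r * sinh (u t / r)) := by
  simp only [gX, gY, gZ, boost, zero_mul, add_zero]

theorem deriv_gX (hr : r ≠ 0) (hu : Differentiable ℝ u) (hv : Differentiable ℝ v) :
    deriv (gX r u v) = fun t =>
      sinh (u t / r) * deriv u t * cosh (v t / r)
        + cosh (u t / r) * deriv v t * sinh (v t / r) := by
  funext t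
  exact ((((hu t).hasDerivAt.div_const r).cosh.const_mul r).mul
    ((hv t).hasDerivAt.div_const r).cosh).deriv.trans (by field_simp)

theorem deriv_gY (hr : r ≠ 0) (hu : Differentiable ℝ u) (hv : Differentiable ℝ v) :
    deriv (gY r u v) = fun t =>
      sinh (u t / r) * deriv u t * sinh (v t / r)
        + cosh (u t / r) * deriv v t * cosh (v t / r) := by
  funext t
  exact ((((hu t).hasDerivAt.div_const r).cosh.const_mul r).mul
    ((hv t).hasDerivAt.div_const r).sinh).deriv.trans (by field_simp)

theorem deriv_gZ (hr : r ≠ 0) (hu : Differentiable ℝ u) :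
    deriv (gZ r u v) = fun t => cosh (u t / r) * deriv u t := by
  funext t
  exact (((hu t).hasDerivAt.div_const r).sinh.const_mul r).deriv.trans (by field_simp)

theorem velocity_eq_boost (hr : r ≠ 0) (hu : Differentiable ℝ u) (hv : Differentiable ℝ v) :
    (deriv (gX r u v) t, deriv (gY r u v) t, deriv (gZ r u v) t)
      = boost (v t / r)
          (sinh (u t / r) * deriv u t, cosh (u t / r) * deriv v t,
            cosh (u t / r) * deriv u t) := by
  rw [deriv_gX hr hu hv, deriv_gY hr hu hv, deriv_gZ hr hu]
  rfl

theorem acceleration_eq_boost (hr : r ≠ 0) (hu : Differentiable ℝ u)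
    (hu2 : Differentiable ℝ (deriv u)) (hv : Differentiable ℝ v)
    (hv2 : Differentiable ℝ (deriv v)) :
    (deriv (deriv (gX r u v)) t, deriv (deriv (gY r u v)) t, deriv (deriv (gZ r u v)) t)
      = boost (v t / r)
          (cosh (u t / r) * (deriv u t ^ 2 + deriv v t ^ 2) / r
              + sinh (u t / r) * deriv (deriv u) t,
            2 * sinh (u t / r) * deriv u t * deriv v t / r + cosh (u t / r) * deriv (deriv v) t,
            sinh (u t / r) * deriv u t ^ 2 / r + cosh (u t / r) * deriv (deriv u) t) := by
  have hU := (hu t).hasDerivAt.div_const r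
  have hV := (hv t).hasDerivAt.div_const r
  have ha := hU.sinh.fun_mul (hu2 t).hasDerivAt
  have hb := hU.cosh.fun_mul (hv2 t).hasDerivAt
  rw [deriv_gX hr hu hv, deriv_gY hr hu hv, deriv_gZ hr hu]
  simp only [boost, Prod.mk.injEq]
  refine ⟨(hasDerivAt_mul_cosh_add_mul_sinh ha hb hV).deriv.trans ?_,
    (hasDerivAt_mul_sinh_add_mul_cosh ha hb hV).deriv.trans ?_,
    (hU.cosh.fun_mul (hu2 t).hasDerivAt).deriv.trans ?_⟩ <;> field_simp <;> ring

theorem speed3_eq_speedSG (hr : r ≠ 0) (hu : Differentiable ℝ u) (hv : Differentiable ℝ v) :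
    speed3 (gX r u v) (gY r u v) (gZ r u v) t = speedSG r u v t := by
  rw [speed3_eq_sqrt_mink3, velocity_eq_boost hr hu hv, mink3_boost, speedSG]
  congr 1
  simp only [mink3]
  linear_combination deriv u t ^ 2 * cosh_sq_sub_sinh_sq (u t / r)

theorem kappaSG_eq (hr : r ≠ 0) (hu : Differentiable ℝ u)
    (hu2 : Differentiable ℝ (deriv u)) (hv : Differentiable ℝ v)
    (hv2 : Differentiable ℝ (deriv v)) :
    kappaSG r u v t
      = (r * cosh (u t / r) * (deriv (deriv u) t * deriv v t - deriv u t * deriv (deriv v) t)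
          - sinh (u t / r) * deriv v t * (2 * deriv u t ^ 2 + cosh (u t / r) ^ 2 * deriv v t ^ 2))
        / (r * speedSG r u v t ^ 3) := by
  rw [kappaSG, kappaH2_eq_det3, position_eq_boost, velocity_eq_boost hr hu hv,
    acceleration_eq_boost hr hu hu2 hv hv2, det3_boost, speed3_eq_speedSG hr hu hv]
  congr 1
  simp only [det3]
  linear_combination (norm := skip) -(2 * sinh (u t / r) * deriv u t ^ 2 * deriv v t
      + r * cosh (u t / r) * (deriv u t * deriv (deriv v) t - deriv v t * deriv (deriv u) t))
    * cosh_sq_sub_sinh_sq (u t / r)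
  field_simp
  ring

theorem speedSG_pos (hreg : (deriv u t, deriv v t) ≠ (0, 0)) : 0 < speedSG r u v t := by
  rw [speedSG, sqrt_pos]
  by_cases hp : deriv u t = 0
  · have hq : deriv v t ≠ 0 := fun hq => hreg (by rw [hp, hq])
    positivity
  · positivity

theorem hasDerivAt_speedSG (hu : Differentiable ℝ u) (hu2 : Differentiable ℝ (deriv u))
    (hv2 : Differentiable ℝ (deriv v)) (hreg : (deriv u t, deriv v t) ≠ (0, 0)) :
    HasDerivAt (speedSG r u v)
      ((deriv u t * deriv (deriv u) t
          + cosh (u t / r) * sinh (u t / r) * deriv u t * deriv v t ^ 2 / r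
          + cosh (u t / r) ^ 2 * deriv v t * deriv (deriv v) t) / speedSG r u v t) t := by
  have hw := speedSG_pos (r := r) hreg
  have hsq : HasDerivAt (fun s => deriv u s ^ 2 + cosh (u s / r) ^ 2 * deriv v s ^ 2) _ t :=
    ((hu2 t).hasDerivAt.fun_pow 2).fun_add
      ((((hu t).hasDerivAt.div_const r).cosh.fun_pow 2).fun_mul ((hv2 t).hasDerivAt.fun_pow 2))
  refine (hsq.sqrt ?_).congr_deriv ?_
  · rw [← speedSG_sq]
    positivity
  · rw [← speedSG]
    field_simp
    ring

theorem elResidual_noether_identity (hf : Differentiable ℝ (Function.uncurry f))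
    (hu : Differentiable ℝ u) (hu2 : Differentiable ℝ (deriv u))
    (hv : Differentiable ℝ v) (hv2 : Differentiable ℝ (deriv v))
    (hreg : (deriv u t, deriv v t) ≠ (0, 0)) :
    deriv u t * elResidualU r f u v t + deriv v t * elResidualV r f u v t = 0 := by
  have hw := speedSG_pos (r := r) hreg
  have hF :=
    hasDerivAt_comp_of_differentiableAt_uncurry (hf _) (hu t).hasDerivAt (hv t).hasDerivAt
  have hW := hasDerivAt_speedSG (r := r) hu hu2 hv2 hreg
  have hC := ((hu t).hasDerivAt.div_const r).cosh.fun_pow 2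
  rw [elResidualU, elResidualV, ((hF.fun_mul (hu2 t).hasDerivAt).fun_div hW hw.ne').deriv,
    (((hF.fun_mul (hv2 t).hasDerivAt).fun_mul hC).fun_div hW hw.ne').deriv]
  set w := speedSG r u v t
  -- the left side is `(Ḟ / w - F ẇ / w²) (w² - u̇² - cosh²(u/r) v̇²)`
  linear_combination (norm := skip)
    ((deriv (fun a => f a (v t)) (u t) * deriv u t
        + deriv (fun b => f (u t) b) (v t) * deriv v t) / w
      - f (u t) (v t) * (deriv u t * deriv (deriv u) t
          + cosh (u t / r) * sinh (u t / r) * deriv u t * deriv v t ^ 2 / r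
          + cosh (u t / r) ^ 2 * deriv v t * deriv (deriv v) t) / w ^ 3) * speedSG_sq r u v t
  field_simp
  ring

theorem elResidual_curvature_identity (hr : r ≠ 0) (hf : Differentiable ℝ (Function.uncurry f))
    (hu : Differentiable ℝ u) (hu2 : Differentiable ℝ (deriv u))
    (hv : Differentiable ℝ v) (hv2 : Differentiable ℝ (deriv v))
    (hreg : (deriv u t, deriv v t) ≠ (0, 0)) (hf₀ : f (u t) (v t) ≠ 0) :
    cosh (u t / r) ^ 2 * deriv v t * elResidualU r f u v t - deriv u t * elResidualV r f u v t
      = -(f (u t) (v t) * cosh (u t / r) * speedSG r u v t ^ 2)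
        * (kappaSG r u v t
          - 1 / (f (u t) (v t) * speedSG r u v t)
            * (deriv v t * deriv (fun a => f a (v t)) (u t) * Real.cosh (u t / r)
              - deriv u t * deriv (fun b => f (u t) b) (v t) / Real.cosh (u t / r))) := by
  have hw := speedSG_pos (r := r) hreg
  have hc := cosh_pos (u t / r)
  have hF :=
    hasDerivAt_comp_of_differentiableAt_uncurry (hf _) (hu t).hasDerivAt (hv t).hasDerivAt
  have hW := hasDerivAt_speedSG (r := r) hu hu2 hv2 hreg
  have hC := ((hu t).hasDerivAt.div_const r).cosh.fun_pow 2
  rw [kappaSG_eq hr hu hu2 hv hv2, elResidualU, elResidualV,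
    ((hF.fun_mul (hu2 t).hasDerivAt).fun_div hW hw.ne').deriv,
    (((hF.fun_mul (hv2 t).hasDerivAt).fun_mul hC).fun_div hW hw.ne').deriv]
  field_simp
  ring

end SemiGeodesic

/-- Euler–Lagrange equations of `∫ f(u,v)‖γ̇‖ dt` iff the prescribed
curvature equation holds. -/
theorem eulerLagrange_iff_curvature (r : ℝ) (hr : 0 < r) (f : ℝ → ℝ → ℝ)
    (hf : ContDiff ℝ 2 (Function.uncurry f)) (hfpos : ∀ a b : ℝ, 0 < f a b)
    (u v : ℝ → ℝ)
    (hu : Differentiable ℝ u) (hu2 : Differentiable ℝ (deriv u))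
    (hv : Differentiable ℝ v) (hv2 : Differentiable ℝ (deriv v))
    (hreg : ∀ t : ℝ, (deriv u t, deriv v t) ≠ (0, 0)) :
    EulerLagrange r f u v ↔
      ∀ t : ℝ,
        kappaSG r u v t
          = 1 / (f (u t) (v t) * speedSG r u v t)
            * (deriv v t * deriv (fun a => f a (v t)) (u t) * Real.cosh (u t / r)
              - deriv u t * deriv (fun b => f (u t) b) (v t) / Real.cosh (u t / r)) := by
  have hfd := hf.differentiable two_ne_zero
  refine forall_congr' fun t => ?_
  have hw := speedSG_pos (r := r) (hreg t)
  have hf₀ := hfpos (u t) (v t)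
  have hdet : deriv u t * -deriv u t - deriv v t * (cosh (u t / r) ^ 2 * deriv v t) ≠ 0 := by
    rw [show deriv u t * -deriv u t - deriv v t * (cosh (u t / r) ^ 2 * deriv v t)
      = -speedSG r u v t ^ 2 by rw [speedSG_sq]; ring]
    exact neg_ne_zero.mpr (by positivity)
  have hscale : -(f (u t) (v t) * cosh (u t / r) * speedSG r u v t ^ 2) ≠ 0 :=
    neg_ne_zero.mpr (by positivity)
  refine (and_congr sub_eq_zero.symm sub_eq_zero.symm).trans
    ((and_eq_zero_iff_of_det_ne_zero hdet hscale
      (elResidual_noether_identity hfd hu hu2 hv hv2 (hreg t)) ?_).trans sub_eq_zero)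
  linear_combination elResidual_curvature_identity hr.ne' hfd hu hu2 hv hv2 (hreg t) hf₀.ne'
end
end

section
/- Let r > 0 and let γ(t) = (x(t), y(t), z(t), 0) be a twice differentiable curve with −x² + y² + z² = −r², x > 0, spacelike velocity, and z(t) > 0 for all t. Consider the surface of revolution of elliptic type S_E(t,θ) = (x(t), y(t), z(t)cos θ, z(t)sin θ) with unit normal ξ = (1/(r‖γ̇‖))·(yż − ẏz, xż − ẋz, (ẋy − xẏ)cos θ, (ẋy − xẏ)sin θ). Then the mean curvature of S_E satisfies H = [z·(x(ÿż − ẏz̈) − y(ẍż − ẋz̈) + z(ẍẏ − ẋÿ)) + (xẏ − ẋy)‖γ̇‖²] / (2rz‖γ̇‖³) for all (t,θ). -/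
/-! The elliptic rotation surface is parametrized orthogonally (g₁₂ = 0), and its mixed derivative
S_tθ is a rotation field orthogonal to ξ (h₁₂ = 0), so H = (h₁₁/g₁₁ + h₂₂/g₂₂)/2. The t-derivatives
of S are again rotation surfaces, of γ̇ and γ̈, so by cos² + sin² = 1 every coefficient is a Minkowski
product in the (x, y, z)-space: g₁₁ = ‖γ̇‖², g₂₂ = z², h₂₂ = z(xẏ − ẋy)/(r‖γ̇‖), and r‖γ̇‖ h₁₁ = −det(γ, γ̇, γ̈). -/

noncomputable section
open Real

/-- Minkowski inner product of `E₁⁴`. -/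
def mink4 (X Y : ℝ × ℝ × ℝ × ℝ) : ℝ :=
  -(X.1 * Y.1) + X.2.1 * Y.2.1 + X.2.2.1 * Y.2.2.1 + X.2.2.2 * Y.2.2.2

/-- Partial derivative in the first (curve) parameter of a parametrized surface. -/
def pderivT (S : ℝ → ℝ → ℝ × ℝ × ℝ × ℝ) (t θ : ℝ) : ℝ × ℝ × ℝ × ℝ :=
  (deriv (fun s => (S s θ).1) t, deriv (fun s => (S s θ).2.1) t,
    deriv (fun s => (S s θ).2.2.1) t, deriv (fun s => (S s θ).2.2.2) t)

/-- Partial derivative in the second (rotation) parameter of a parametrized surface. -/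
def pderivTh (S : ℝ → ℝ → ℝ × ℝ × ℝ × ℝ) (t θ : ℝ) : ℝ × ℝ × ℝ × ℝ :=
  (deriv (fun p => (S t p).1) θ, deriv (fun p => (S t p).2.1) θ,
    deriv (fun p => (S t p).2.2.1) θ, deriv (fun p => (S t p).2.2.2) θ)

/-- Mean curvature of a parametrized surface `S` in `H³(r)` with respect to the unit
normal field `ξ`: `H = (g₂₂h₁₁ − 2g₁₂h₁₂ + g₁₁h₂₂)/(2(g₁₁g₂₂ − g₁₂²))`. -/
def meanCurv (S ξ : ℝ → ℝ → ℝ × ℝ × ℝ × ℝ) (t θ : ℝ) : ℝ :=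
  let g11 := mink4 (pderivT S t θ) (pderivT S t θ)
  let g12 := mink4 (pderivT S t θ) (pderivTh S t θ)
  let g22 := mink4 (pderivTh S t θ) (pderivTh S t θ)
  let h11 := mink4 (pderivT (fun a b => pderivT S a b) t θ) (ξ t θ)
  let h12 := mink4 (pderivTh (fun a b => pderivT S a b) t θ) (ξ t θ)
  let h22 := mink4 (pderivTh (fun a b => pderivTh S a b) t θ) (ξ t θ)
  (g22 * h11 - 2 * g12 * h12 + g11 * h22) / (2 * (g11 * g22 - g12 ^ 2))

lemma mink4_comm (X Y : ℝ × ℝ × ℝ × ℝ) : mink4 X Y = mink4 Y X := by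
  simp only [mink4]
  ring

lemma mink4_smul_right (c : ℝ) (X Y : ℝ × ℝ × ℝ × ℝ) :
    mink4 X (c • Y) = c * mink4 X Y := by
  simp only [mink4, Prod.smul_fst, Prod.smul_snd, smul_eq_mul]
  ring

lemma mink4_revolution (a b c a' b' c' θ : ℝ) :
    mink4 (a, b, c * cos θ, c * sin θ) (a', b', c' * cos θ, c' * sin θ)
      = -(a * a') + b * b' + c * c' := by
  simp only [mink4]
  linear_combination c * c' * cos_sq_add_sin_sq θ

lemma mink4_rotation_revolution (c a' b' c' θ : ℝ) :
    mink4 (0, 0, c * -sin θ, c * cos θ) (a', b', c' * cos θ, c' * sin θ) = 0 := by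
  simp only [mink4]
  ring

lemma mink4_rotation_self (c θ : ℝ) :
    mink4 (0, 0, c * -sin θ, c * cos θ) (0, 0, c * -sin θ, c * cos θ) = c ^ 2 := by
  simp only [mink4]
  linear_combination c ^ 2 * cos_sq_add_sin_sq θ

section Revolution

variable (x y z : ℝ → ℝ) (t θ : ℝ)

lemma pderivT_revolution :
    pderivT (fun s φ => ((x s, y s, z s * cos φ, z s * sin φ) : ℝ × ℝ × ℝ × ℝ)) t θ
      = (deriv x t, deriv y t, deriv z t * cos θ, deriv z t * sin θ) := by
  simp only [pderivT, deriv_mul_const_field]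

lemma pderivTh_revolution :
    pderivTh (fun s φ => ((x s, y s, z s * cos φ, z s * sin φ) : ℝ × ℝ × ℝ × ℝ)) t θ
      = (0, 0, z t * -sin θ, z t * cos θ) := by
  simp only [pderivTh, deriv_const, deriv_const_mul_field, Real.deriv_cos, Real.deriv_sin]

lemma pderivTh_rotation :
    pderivTh (fun s φ => ((0, 0, z s * -sin φ, z s * cos φ) : ℝ × ℝ × ℝ × ℝ)) t θ
      = (0, 0, -z t * cos θ, -z t * sin θ) := by
  simp only [pderivTh, deriv_const, deriv_const_mul_field, deriv.fun_neg, Real.deriv_cos,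
    Real.deriv_sin, mul_neg, neg_mul]

end Revolution

lemma meanCurv_of_orthogonal (S ξ : ℝ → ℝ → ℝ × ℝ × ℝ × ℝ) (t θ : ℝ)
    (hg12 : mink4 (pderivT S t θ) (pderivTh S t θ) = 0)
    (hh12 : mink4 (pderivTh (fun a b => pderivT S a b) t θ) (ξ t θ) = 0) :
    meanCurv S ξ t θ
      = (mink4 (pderivTh S t θ) (pderivTh S t θ)
            * mink4 (pderivT (fun a b => pderivT S a b) t θ) (ξ t θ)
          + mink4 (pderivT S t θ) (pderivT S t θ)
            * mink4 (pderivTh (fun a b => pderivTh S a b) t θ) (ξ t θ))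
        / (2 * (mink4 (pderivT S t θ) (pderivT S t θ)
            * mink4 (pderivTh S t θ) (pderivTh S t θ))) := by
  simp only [meanCurv, hg12, hh12]
  ring

theorem meanCurvature_elliptic_general (r : ℝ) (hr : 0 < r) (x y z : ℝ → ℝ)
    (hsp : ∀ t : ℝ, 0 < -(deriv x t) ^ 2 + (deriv y t) ^ 2 + (deriv z t) ^ 2)
    (hz0 : ∀ t : ℝ, 0 < z t) :
    ∀ t θ : ℝ,
      meanCurv (fun t θ => ((x t, y t, z t * Real.cos θ, z t * Real.sin θ) : ℝ × ℝ × ℝ × ℝ))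
        (fun t θ =>
          ((r * speed3 x y z t)⁻¹ •
            ((y t * deriv z t - deriv y t * z t,
              x t * deriv z t - deriv x t * z t,
              (deriv x t * y t - x t * deriv y t) * Real.cos θ,
              (deriv x t * y t - x t * deriv y t) * Real.sin θ) : ℝ × ℝ × ℝ × ℝ))) t θ
      = (z t * (x t * (deriv (deriv y) t * deriv z t - deriv y t * deriv (deriv z) t)
            - y t * (deriv (deriv x) t * deriv z t - deriv x t * deriv (deriv z) t)
            + z t * (deriv (deriv x) t * deriv y t - deriv x t * deriv (deriv y) t))
          + (x t * deriv y t - deriv x t * y t) * (speed3 x y z t) ^ 2)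
        / (2 * r * z t * (speed3 x y z t) ^ 3) := by
  intro t θ
  have hs : 0 < speed3 x y z t := sqrt_pos.mpr (hsp t)
  have hg11 : -(deriv x t * deriv x t) + deriv y t * deriv y t + deriv z t * deriv z t
      = speed3 x y z t ^ 2 := by
    rw [speed3, sq_sqrt (hsp t).le]
    ring
  rw [meanCurv_of_orthogonal]
  · simp only [pderivT_revolution, pderivTh_revolution, pderivTh_rotation,
      mink4_smul_right, mink4_revolution, mink4_rotation_self, hg11]
    have hz : 0 < z t := hz0 t
    field_simp
    ring
  · rw [mink4_comm]
    simp only [pderivT_revolution, pderivTh_revolution, mink4_rotation_revolution]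
  · simp only [pderivT_revolution, pderivTh_revolution, mink4_smul_right,
      mink4_rotation_revolution, mul_zero]

/-- mean curvature of the surface of revolution of elliptic type. -/
theorem meanCurvature_elliptic (r : ℝ) (hr : 0 < r) (x y z : ℝ → ℝ)
    (hx : Differentiable ℝ x) (hx2 : Differentiable ℝ (deriv x))
    (hy : Differentiable ℝ y) (hy2 : Differentiable ℝ (deriv y))
    (hz : Differentiable ℝ z) (hz2 : Differentiable ℝ (deriv z))
    (hH2 : ∀ t : ℝ, -(x t) ^ 2 + (y t) ^ 2 + (z t) ^ 2 = -r ^ 2)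
    (hx0 : ∀ t : ℝ, 0 < x t)
    (hsp : ∀ t : ℝ, 0 < -(deriv x t) ^ 2 + (deriv y t) ^ 2 + (deriv z t) ^ 2)
    (hz0 : ∀ t : ℝ, 0 < z t) :
    ∀ t θ : ℝ,
      meanCurv (fun t θ => ((x t, y t, z t * Real.cos θ, z t * Real.sin θ) : ℝ × ℝ × ℝ × ℝ))
        (fun t θ =>
          ((r * speed3 x y z t)⁻¹ •
            ((y t * deriv z t - deriv y t * z t,
              x t * deriv z t - deriv x t * z t,
              (deriv x t * y t - x t * deriv y t) * Real.cos θ,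
              (deriv x t * y t - x t * deriv y t) * Real.sin θ) : ℝ × ℝ × ℝ × ℝ))) t θ
      = (z t * (x t * (deriv (deriv y) t * deriv z t - deriv y t * deriv (deriv z) t)
            - y t * (deriv (deriv x) t * deriv z t - deriv x t * deriv (deriv z) t)
            + z t * (deriv (deriv x) t * deriv y t - deriv x t * deriv (deriv y) t))
          + (x t * deriv y t - deriv x t * y t) * (speed3 x y z t) ^ 2)
        / (2 * r * z t * (speed3 x y z t) ^ 3) :=
  meanCurvature_elliptic_general r hr x y z hsp hz0
end
end
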